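/- arXiv:1510.06313 — 3 statements merged into one kernel-verified Lean document; each statement's English description precedes it below -/
import Mathlib

section
/- Let f : ℝ → ℂ be bounded by M and differentiable with derivative f'. If the mean values A = lim_{T→∞} (1/T) ∫_0^T f(x) exp(-iλx) dx and A' = lim_{T→∞} (1/T) ∫_0^T f'(x) exp(-iλx) dx both exist for a fixed real λ, then A' = iλ A. -/
/-! With `e x = exp (-iλx)` one has `(f e)' = f' e - iλ f e`, and `f e` is bounded, so the mean
`((f e) T - (f e) 0) / T` of its derivative over `[0, T]` tends to `0`. -/

open Filter MeasureTheory intervalIntegral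

theorem tendsto_inv_smul_integral_deriv_of_norm_le {E : Type*} [NormedAddCommGroup E]
    [NormedSpace ℝ E] [CompleteSpace E] {g g' : ℝ → E} {C : ℝ}
    (hg : ∀ x, HasDerivAt g (g' x) x) (hint : LocallyIntegrable g' volume)
    (hbd : ∀ x, ‖g x‖ ≤ C) :
    Tendsto (fun T : ℝ => T⁻¹ • ∫ x in (0:ℝ)..T, g' x) atTop (nhds 0) := by
  have hftc : ∀ T : ℝ, ∫ x in (0:ℝ)..T, g' x = g T - g 0 := fun T =>
    integral_eq_sub_of_hasDerivAt (fun x _ => hg x)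
      (hint.integrableOn_isCompact isCompact_uIcc).intervalIntegrable
  simp only [hftc]
  refine tendsto_inv_atTop_zero.zero_smul_isBoundedUnder_le ⟨C + C, eventually_map.2 ?_⟩
  exact Eventually.of_forall fun T => (norm_sub_le _ _).trans (add_le_add (hbd T) (hbd 0))

theorem hasDerivAt_cexp_neg_I_mul (l x : ℝ) :
    HasDerivAt (fun x : ℝ => Complex.exp (-(Complex.I * l * x)))
      (-(Complex.I * l) * Complex.exp (-(Complex.I * l * x))) x := by
  have h : HasDerivAt (fun x : ℝ => -(Complex.I * l) * x) (-(Complex.I * l)) x := by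
    simpa using (Complex.ofRealCLM.hasDerivAt (x := x)).const_mul (-(Complex.I * l))
  simpa [mul_comm, neg_mul] using h.cexp

theorem norm_cexp_neg_I_mul (l x : ℝ) : ‖Complex.exp (-(Complex.I * l * x))‖ = 1 := by
  simpa [mul_comm, mul_left_comm] using Complex.norm_exp_ofReal_mul_I (-(l * x))

theorem tendsto_mean_deriv_mul_add_const_mul_mean {f f' e : ℝ → ℂ} {c : ℂ} {M K : ℝ}
    (hf : ∀ x, HasDerivAt f (f' x) x) (hf' : LocallyIntegrable f' volume)
    (hf_bd : ∀ x, ‖f x‖ ≤ M) (he : ∀ x, HasDerivAt e (c * e x) x)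
    (he_bd : ∀ x, ‖e x‖ ≤ K) :
    Tendsto (fun T : ℝ => (1 / T : ℂ) * (∫ x in (0:ℝ)..T, f' x * e x) +
      c * ((1 / T : ℂ) * ∫ x in (0:ℝ)..T, f x * e x)) atTop (nhds 0) := by
  have he_cont : Continuous e := continuous_iff_continuousAt.2 fun x => (he x).continuousAt
  have hf_cont : Continuous f := continuous_iff_continuousAt.2 fun x => (hf x).continuousAt
  have hfe_cont : Continuous fun x => c * (f x * e x) := by fun_prop
  have hf'e_int : LocallyIntegrable (fun x => f' x * e x) volume := hf'.mul_continuous he_cont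
  have hmean_split : ∀ T : ℝ, T⁻¹ • ∫ x in (0:ℝ)..T, (f' x * e x + c * (f x * e x)) =
      (1 / T : ℂ) * (∫ x in (0:ℝ)..T, f' x * e x) +
        c * ((1 / T : ℂ) * ∫ x in (0:ℝ)..T, f x * e x) := by
    intro T
    rw [integral_add (hf'e_int.integrableOn_isCompact isCompact_uIcc).intervalIntegrable
      (hfe_cont.intervalIntegrable 0 T), intervalIntegral.integral_const_mul, Complex.real_smul]
    push_cast; ring
  simp only [← hmean_split]
  exact tendsto_inv_smul_integral_deriv_of_norm_le
    (fun x => ((hf x).mul (he x)).congr_deriv (by ring))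
    (hf'e_int.add hfe_cont.locallyIntegrable) (fun x => norm_mul_le_of_le (hf_bd x) (he_bd x))

theorem meanValue_deriv (f f' : ℝ → ℂ) (M : ℝ) (l : ℝ) (A A' : ℂ)
    (hbd : ∀ x : ℝ, ‖f x‖ ≤ M)
    (hderiv : ∀ x : ℝ, HasDerivAt f (f' x) x)
    (hloc : LocallyIntegrable f' volume)
    (hA : Tendsto (fun T : ℝ => (1 / T : ℂ) *
      ∫ x in (0:ℝ)..T, f x * Complex.exp (-(Complex.I * (l : ℂ) * (x : ℂ))))
      atTop (nhds A))
    (hA' : Tendsto (fun T : ℝ => (1 / T : ℂ) *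
      ∫ x in (0:ℝ)..T, f' x * Complex.exp (-(Complex.I * (l : ℂ) * (x : ℂ))))
      atTop (nhds A')) :
    A' = Complex.I * (l : ℂ) * A := by
  have hzero := tendsto_mean_deriv_mul_add_const_mul_mean hderiv hloc hbd
    (hasDerivAt_cexp_neg_I_mul l) (fun x => (norm_cexp_neg_I_mul l x).le)
  have hlim := tendsto_nhds_unique hzero (hA'.add (hA.const_mul (-(Complex.I * l))))
  linear_combination -hlim
end

section
/- Let f : ℝ → ℂ be (n+1)-times continuously differentiable, with f, f', …, f^{(n)} all bounded, and suppose C = lim sup_{T→∞} (1/T) ∫_0^T |f^{(n+1)}(x)| dx is finite. If for a nonzero real λ the Fourier coefficient A = lim_{T→∞} (1/T) ∫_0^T f(x) exp(-iλx) dx exists, then |A| ≤ C / |λ|^{n+1}. -/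
/-!
Integrating by parts against `e(x) = exp (-i l x)` turns the average of `g' e` over `[0, T]` into
`i l` times the average of `g e` plus a boundary term `(g T e T - g 0) / T`, which vanishes as
`T → ∞` when `g` is bounded. Applying this to `f, f', …, f⁽ⁿ⁾` shows that the Fourier averages of
`f⁽ⁿ⁺¹⁾` tend to `(i l)ⁿ⁺¹ A`, while each of them is bounded in norm by the average of `‖f⁽ⁿ⁺¹⁾‖`.
-/

open Filter MeasureTheory intervalIntegral Complex

lemma hasDerivAt_exp_neg_I_mul (l x : ℝ) :
    HasDerivAt (fun x : ℝ => exp (-(I * (l : ℂ) * (x : ℂ))))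
      (-(I * (l : ℂ)) * exp (-(I * (l : ℂ) * (x : ℂ)))) x := by
  have h : HasDerivAt (fun x : ℝ => -(I * (l : ℂ) * (x : ℂ))) (-(I * (l : ℂ))) x :=
    ((ofRealCLM.hasDerivAt (x := x)).const_mul (I * (l : ℂ))).neg.congr_deriv (by simp)
  simpa [mul_comm] using h.cexp

lemma norm_exp_neg_I_mul (l x : ℝ) : ‖exp (-(I * (l : ℂ) * (x : ℂ)))‖ = 1 := by
  rw [mul_assoc, ← ofReal_mul, ← mul_neg, ← ofReal_neg]
  exact norm_exp_I_mul_ofReal _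

noncomputable def fourierAverage (g : ℝ → ℂ) (l T : ℝ) : ℂ :=
  (1 / T : ℂ) * ∫ x in (0:ℝ)..T, g x * exp (-(I * (l : ℂ) * (x : ℂ)))

section FourierAverage

variable {g g' : ℝ → ℂ} {l : ℝ}

lemma integral_deriv_mul_exp_neg_I_mul (hg : ∀ x, HasDerivAt g (g' x) x) (a b : ℝ)
    (hg' : IntervalIntegrable g' volume a b) :
    ∫ x in a..b, g' x * exp (-(I * (l : ℂ) * (x : ℂ)))
      = g b * exp (-(I * (l : ℂ) * (b : ℂ))) - g a * exp (-(I * (l : ℂ) * (a : ℂ)))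
        + I * l * ∫ x in a..b, g x * exp (-(I * (l : ℂ) * (x : ℂ))) := by
  have parts := integral_mul_deriv_eq_deriv_mul (fun x _ => hg x)
    (fun x _ => hasDerivAt_exp_neg_I_mul l x) hg'
    ((by fun_prop : Continuous fun x : ℝ => -(I * (l : ℂ)) * exp (-(I * (l : ℂ) * (x : ℂ))))
      |>.intervalIntegrable a b)
  simp only [mul_left_comm _ (-(I * (l : ℂ))), intervalIntegral.integral_const_mul] at parts
  linear_combination parts

lemma norm_fourierAverage_le {T : ℝ} (hT : 0 ≤ T) :
    ‖fourierAverage g l T‖ ≤ (1 / T) * ∫ x in (0:ℝ)..T, ‖g x‖ := by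
  rw [fourierAverage, norm_mul, norm_div, norm_one, norm_real, Real.norm_of_nonneg hT]
  gcongr
  calc ‖∫ x in (0:ℝ)..T, g x * exp (-(I * (l : ℂ) * (x : ℂ)))‖
      ≤ ∫ x in (0:ℝ)..T, ‖g x * exp (-(I * (l : ℂ) * (x : ℂ)))‖ :=
        norm_integral_le_integral_norm hT
    _ = ∫ x in (0:ℝ)..T, ‖g x‖ := by simp only [norm_mul, norm_exp_neg_I_mul, mul_one]

lemma tendsto_fourierAverage_deriv {L : ℂ} (hg : ∀ x, HasDerivAt g (g' x) x)
    (hg' : Continuous g') (hbdd : IsBoundedUnder (· ≤ ·) atTop (fun x => ‖g x‖))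
    (hL : Tendsto (fourierAverage g l) atTop (nhds L)) :
    Tendsto (fourierAverage g' l) atTop (nhds (I * l * L)) := by
  have boundary : Tendsto (fun T : ℝ => (1 / T : ℂ) *
      (g T * exp (-(I * (l : ℂ) * (T : ℂ))) - g 0)) atTop (nhds 0) := by
    have inv : Tendsto (fun T : ℝ => (1 / T : ℂ)) atTop (nhds 0) := by
      simpa [Function.comp_def] using (continuous_ofReal.tendsto 0).comp tendsto_inv_atTop_zero
    refine inv.zero_mul_isBoundedUnder_le ?_
    obtain ⟨M, hM⟩ := hbdd
    refine ⟨M + ‖g 0‖, eventually_map.mpr ((eventually_map.mp hM).mono fun T hT => ?_)⟩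
    calc ‖g T * exp (-(I * (l : ℂ) * (T : ℂ))) - g 0‖
        ≤ ‖g T‖ + ‖g 0‖ :=
          (norm_sub_le _ _).trans_eq (by rw [norm_mul, norm_exp_neg_I_mul, mul_one])
      _ ≤ M + ‖g 0‖ := by gcongr
  have parts : fourierAverage g' l = fun T : ℝ => (1 / T : ℂ) *
      (g T * exp (-(I * (l : ℂ) * (T : ℂ))) - g 0) + I * l * fourierAverage g l T := by
    funext T
    simp only [fourierAverage,
      integral_deriv_mul_exp_neg_I_mul hg 0 T (hg'.intervalIntegrable _ _), ofReal_zero,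
      mul_zero, neg_zero, exp_zero, mul_one]
    ring
  rw [parts]
  simpa using boundary.add (hL.const_mul (I * l))

end FourierAverage

lemma tendsto_fourierAverage_iteratedDeriv {f : ℝ → ℂ} {n : ℕ} {l : ℝ} {A : ℂ}
    (hsmooth : ContDiff ℝ (n + 1) f)
    (hbd : ∀ k ≤ n, ∃ M : ℝ, ∀ x : ℝ, ‖iteratedDeriv k f x‖ ≤ M)
    (hA : Tendsto (fourierAverage f l) atTop (nhds A)) :
    ∀ k ≤ n + 1, Tendsto (fourierAverage (iteratedDeriv k f) l) atTop (nhds ((I * l) ^ k * A))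
  | 0, _ => by simpa using hA
  | k + 1, hk => by
    have hkn : k ≤ n := Nat.le_of_succ_le_succ hk
    have hderiv : ∀ x, HasDerivAt (iteratedDeriv k f) (iteratedDeriv (k + 1) f x) x := by
      intro x
      rw [iteratedDeriv_succ]
      exact (hsmooth.differentiable_iteratedDeriv k (by exact_mod_cast hk) x).hasDerivAt
    obtain ⟨M, hM⟩ := hbd k hkn
    rw [pow_succ', mul_assoc]
    exact tendsto_fourierAverage_deriv hderiv
      (hsmooth.continuous_iteratedDeriv (k + 1) (by exact_mod_cast hk))
      (isBoundedUnder_of ⟨M, hM⟩)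
      (tendsto_fourierAverage_iteratedDeriv hsmooth hbd hA k (by omega))

theorem fourierCoeff_bound_iterated (f : ℝ → ℂ) (n : ℕ) (l : ℝ) (A : ℂ)
    (hsmooth : ContDiff ℝ (n + 1) f)
    (hbd : ∀ k ≤ n, ∃ M : ℝ, ∀ x : ℝ, ‖iteratedDeriv k f x‖ ≤ M)
    (hfin : IsBoundedUnder (· ≤ ·) atTop
      (fun T : ℝ => (1 / T) * ∫ x in (0:ℝ)..T, ‖iteratedDeriv (n + 1) f x‖))
    (hl : l ≠ 0)
    (hA : Tendsto (fun T : ℝ => (1 / T : ℂ) *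
      ∫ x in (0:ℝ)..T, f x * Complex.exp (-(Complex.I * (l : ℂ) * (x : ℂ))))
      atTop (nhds A)) :
    ‖A‖ ≤ (Filter.limsup
      (fun T : ℝ => (1 / T) * ∫ x in (0:ℝ)..T, ‖iteratedDeriv (n + 1) f x‖) atTop)
      / |l| ^ (n + 1) := by
  have hlim : Tendsto (fun T => ‖fourierAverage (iteratedDeriv (n + 1) f) l T‖) atTop
      (nhds (|l| ^ (n + 1) * ‖A‖)) := by
    simpa [norm_mul, norm_pow] using
      (tendsto_fourierAverage_iteratedDeriv hsmooth hbd hA (n + 1) le_rfl).norm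
  have hle := limsup_le_limsup
    ((eventually_ge_atTop 0).mono fun T hT => norm_fourierAverage_le (l := l) hT)
    hlim.isBoundedUnder_ge.isCoboundedUnder_le hfin
  rw [hlim.limsup_eq] at hle
  rwa [le_div_iff₀ (by positivity), mul_comm]
end

section
/- Fix real x and integers N ≥ 2 and J ≥ 0, and let ζ_{x,N}(y) = ∑_{n=1}^{N} n^{-x} exp(-i y log n). Then lim sup_{T→∞} (1/T) ∫_0^T |d^{J+1}/dy^{J+1} ζ_{x,N}(y)| dy ≥ max_{2 ≤ n ≤ N} n^{-x} (log n)^{J+1}. -/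
/-!
Write `ζ_{x,N}` as an exponential sum `∑ cₙ e^{i ωₙ y}` with distinct real frequencies
`ωₙ = -log n`; its derivatives are again such sums, with coefficients `cₙ (i ωₙ)^k`.
Multiplying by `e^{-i ωₘ y}` and averaging over `[0, T]` isolates the coefficient of the
frequency `ωₘ`, since every other term has an integral bounded in `T`. The norm of that
average is at most the average of the norm, which gives `‖cₘ (i ωₘ)^{J+1}‖` as a lower bound
for the limsup.
-/

open Filter MeasureTheory intervalIntegral

open Complex Topology

theorem Complex.norm_exp_ofReal_mul_I_mul_ofReal (r y : ℝ) : ‖cexp (r * I * y)‖ = 1 := by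
  rw [show (r : ℂ) * I * y = ↑(r * y) * I by push_cast; ring, norm_exp_ofReal_mul_I]

theorem norm_le_limsup_average_norm {E : Type*} [NormedAddCommGroup E] [NormedSpace ℝ E]
    [CompleteSpace E] {g : ℝ → E} {M : ℝ} {a : E} (hg : Continuous g) (hM : ∀ y, ‖g y‖ ≤ M)
    (ha : Tendsto (fun T : ℝ => T⁻¹ • ∫ y in (0 : ℝ)..T, g y) atTop (𝓝 a)) :
    ‖a‖ ≤ limsup (fun T : ℝ => (1 / T) * ∫ y in (0 : ℝ)..T, ‖g y‖) atTop := by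
  have hle : ∀ᶠ T in atTop,
      ‖T⁻¹ • ∫ y in (0 : ℝ)..T, g y‖ ≤ (1 / T) * ∫ y in (0 : ℝ)..T, ‖g y‖ := by
    filter_upwards [eventually_gt_atTop 0] with T hT
    rw [norm_smul, Real.norm_of_nonneg (inv_nonneg.2 hT.le), one_div]
    gcongr
    exact norm_integral_le_integral_norm hT.le
  have hbdd : ∀ᶠ T in atTop, (1 / T) * ∫ y in (0 : ℝ)..T, ‖g y‖ ≤ M := by
    filter_upwards [eventually_gt_atTop 0] with T hT
    have : ∫ y in (0 : ℝ)..T, ‖g y‖ ≤ ∫ _ in (0 : ℝ)..T, M :=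
      integral_mono_on hT.le (hg.norm.intervalIntegrable _ _) intervalIntegrable_const
        fun y _ => hM y
    rw [intervalIntegral.integral_const, smul_eq_mul, sub_zero] at this
    rw [one_div, inv_mul_le_iff₀ hT]
    linarith
  rw [← ha.norm.limsup_eq]
  exact limsup_le_limsup hle ha.norm.isCoboundedUnder_le (isBoundedUnder_of_eventually_le hbdd)

theorem tendsto_average_integral_exp_mul_I (r : ℝ) :
    Tendsto (fun T : ℝ => T⁻¹ • ∫ y in (0 : ℝ)..T, cexp (r * I * y)) atTop
      (𝓝 (if r = 0 then 1 else 0)) := by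
  split_ifs with hr
  · refine tendsto_const_nhds.congr' ?_
    filter_upwards [eventually_ne_atTop 0] with T hT
    simp [hr, hT]
  · have hrI : (r : ℂ) * I ≠ 0 := mul_ne_zero (ofReal_ne_zero.2 hr) I_ne_zero
    refine squeeze_zero_norm' (a := fun T => T⁻¹ * (2 / ‖(r : ℂ) * I‖)) ?_ ?_
    · filter_upwards [eventually_gt_atTop 0] with T hT
      rw [integral_exp_mul_complex hrI, norm_smul, Real.norm_of_nonneg (inv_nonneg.2 hT.le),
        norm_div]
      gcongr
      calc ‖cexp (r * I * T) - cexp (r * I * 0)‖ ≤ ‖cexp (r * I * T)‖ + ‖cexp (r * I * 0)‖ :=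
            norm_sub_le _ _
        _ = 2 := by
          rw [norm_exp_ofReal_mul_I_mul_ofReal, ← ofReal_zero, norm_exp_ofReal_mul_I_mul_ofReal]
          norm_num
    · simpa using tendsto_inv_atTop_zero.mul_const (2 / ‖(r : ℂ) * I‖)

noncomputable def expSum {ι : Type*} (s : Finset ι) (c : ι → ℂ) (ω : ι → ℝ) (y : ℝ) : ℂ :=
  ∑ i ∈ s, c i * cexp (ω i * I * y)

namespace expSum

variable {ι : Type*} (s : Finset ι) (c : ι → ℂ) (ω : ι → ℝ)

@[fun_prop]
theorem continuous : Continuous (expSum s c ω) := by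
  unfold expSum; fun_prop

theorem norm_le (y : ℝ) : ‖expSum s c ω y‖ ≤ ∑ i ∈ s, ‖c i‖ := by
  refine (norm_sum_le _ _).trans (Finset.sum_le_sum fun i _ => ?_)
  rw [norm_mul, norm_exp_ofReal_mul_I_mul_ofReal, mul_one]

theorem hasDerivAt (y : ℝ) :
    HasDerivAt (expSum s c ω) (expSum s (fun i => c i * (ω i * I)) ω y) y := by
  refine HasDerivAt.fun_sum fun i _ => ?_
  have h := (((hasDerivAt_id y).ofReal_comp).const_mul ((ω i : ℂ) * I)).cexp.const_mul (c i)
  simpa [mul_comm, mul_left_comm, mul_assoc] using h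

theorem iteratedDeriv_eq (k : ℕ) :
    iteratedDeriv k (expSum s c ω) = expSum s (fun i => c i * (ω i * I) ^ k) ω := by
  induction k with
  | zero => simp
  | succ k ih =>
    ext y
    rw [iteratedDeriv_succ, ih, (hasDerivAt s _ ω y).deriv]
    simp only [pow_succ, mul_assoc]

theorem mul_exp (r y : ℝ) :
    expSum s c ω y * cexp (r * I * y) = expSum s c (fun i => ω i + r) y := by
  simp only [expSum, Finset.sum_mul, mul_assoc, ← Complex.exp_add]
  refine Finset.sum_congr rfl fun i _ => ?_
  push_cast; ring_nf

theorem tendsto_average_integral :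
    Tendsto (fun T : ℝ => T⁻¹ • ∫ y in (0 : ℝ)..T, expSum s c ω y) atTop
      (𝓝 (∑ i ∈ s with ω i = 0, c i)) := by
  have hsum : ∀ T : ℝ, T⁻¹ • ∫ y in (0 : ℝ)..T, expSum s c ω y =
      ∑ i ∈ s, c i * T⁻¹ • ∫ y in (0 : ℝ)..T, cexp (ω i * I * y) := by
    intro T
    simp only [expSum]
    rw [integral_finsetSum fun i _ => (by fun_prop : Continuous _).intervalIntegrable _ _,
      Finset.smul_sum]
    simp only [intervalIntegral.integral_const_mul, mul_smul_comm]
  have hlim : ∑ i ∈ s with ω i = 0, c i = ∑ i ∈ s, c i * if ω i = 0 then 1 else 0 := by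
    simp [Finset.sum_filter]
  rw [funext hsum, hlim]
  exact tendsto_finsetSum _ fun i _ => (tendsto_average_integral_exp_mul_I _).const_mul _

theorem tendsto_average_integral_mul_exp {j : ι} (hj : j ∈ s) (hω : Set.InjOn ω s) :
    Tendsto (fun T : ℝ => T⁻¹ • ∫ y in (0 : ℝ)..T, expSum s c ω y * cexp (-ω j * I * y))
      atTop (𝓝 (c j)) := by
  have hfreq : ({i ∈ s | ω i + -ω j = 0} : Finset ι) = {j} := by
    ext i
    simp only [Finset.mem_filter, Finset.mem_singleton, add_neg_eq_zero]
    exact ⟨fun h => hω h.1 hj h.2, by rintro rfl; exact ⟨hj, rfl⟩⟩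
  simpa [← ofReal_neg, mul_exp, hfreq] using tendsto_average_integral s c (fun i => ω i + -ω j)

theorem norm_coeff_le_limsup_average_norm {j : ι} (hj : j ∈ s) (hω : Set.InjOn ω s) :
    ‖c j‖ ≤ limsup (fun T : ℝ => (1 / T) * ∫ y in (0 : ℝ)..T, ‖expSum s c ω y‖) atTop := by
  have hnorm : ∀ y, ‖expSum s c ω y * cexp (-ω j * I * y)‖ = ‖expSum s c ω y‖ := fun y => by
    rw [norm_mul, ← ofReal_neg, norm_exp_ofReal_mul_I_mul_ofReal, mul_one]
  simpa only [hnorm] using norm_le_limsup_average_norm (by fun_prop)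
    (fun y => (hnorm y).trans_le (norm_le s c ω y)) (tendsto_average_integral_mul_exp s c ω hj hω)

end expSum

theorem truncatedZeta_avgBV_lower (x : ℝ) (N : ℕ) (hN : 2 ≤ N) (J : ℕ)
    (ζ : ℝ → ℂ)
    (hζ : ∀ y : ℝ, ζ y = ∑ n ∈ Finset.Icc 1 N,
      ((n : ℝ) ^ (-x) : ℝ) * Complex.exp (-(Complex.I * (y : ℂ) * (Real.log n : ℂ)))) :
    (Finset.Icc 2 N).sup' (Finset.nonempty_Icc.mpr hN)
        (fun n => (n : ℝ) ^ (-x) * (Real.log n) ^ (J + 1)) ≤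
      Filter.limsup
        (fun T : ℝ => (1 / T) * ∫ y in (0:ℝ)..T, ‖iteratedDeriv (J + 1) ζ y‖)
        atTop := by
  have hζ_eq : ζ = expSum (Finset.Icc 1 N) (fun n => ((n : ℝ) ^ (-x) : ℝ))
      (fun n => -Real.log n) := by
    ext y
    rw [hζ y, expSum]
    refine Finset.sum_congr rfl fun n _ => ?_
    push_cast; ring_nf
  have hinj : Set.InjOn (fun n : ℕ => -Real.log n) (Finset.Icc 1 N) := by
    intro n hn m hm h
    have hpos : ∀ k ∈ Finset.Icc 1 N, (0 : ℝ) < k := fun k hk => by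
      exact_mod_cast (Finset.mem_Icc.1 hk).1
    exact Nat.cast_injective (Real.log_injOn_pos (hpos n hn) (hpos m hm) (neg_inj.1 h))
  rw [hζ_eq, expSum.iteratedDeriv_eq]
  refine Finset.sup'_le _ _ fun m hm => ?_
  have hm1 : m ∈ Finset.Icc 1 N := Finset.Icc_subset_Icc_left one_le_two hm
  refine le_of_eq_of_le ?_ (expSum.norm_coeff_le_limsup_average_norm _ _ _ hm1 hinj)
  have hlog : 0 ≤ Real.log m := Real.log_nonneg (by exact_mod_cast (Finset.mem_Icc.1 hm1).1)
  rw [norm_mul, norm_pow, norm_mul, norm_I, mul_one, norm_real, norm_real, norm_neg,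
    Real.norm_of_nonneg hlog, Real.norm_of_nonneg (Real.rpow_nonneg m.cast_nonneg _)]
end
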